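/- Let φ¹(t) = 5^{−2} t² (log t)^4 and φ²(t) = 5^{−2} e^{−2+2√(1−t)} (2t + 2√(1−t) − 2)² for t in a sufficiently small right neighborhood of 0, with φ¹(0) = φ²(0) = 0, and for n large define A_n = log( n^{−1/2} · (φ²)^{-1}(n^{−1/2}) / ((φ¹)^{-1}(n^{−1/2}))² ) and B_n = log( (φ²)^{-1}(n^{−1/2}) / n^{−1/2} ), where the inverses are the generalized inverses restricted to small arguments. Then for every γ ∈ ℝ the sequence (|γ A_n − B_n|)_n is unbounded. -/

import Mathlib

open Real Set

noncomputable section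

/-- `φ¹(t) = 5⁻² t² (log t)⁴` (with `φ¹(0) = 0`, since `Real.log 0 = 0`). -/
def phi1 (t : ℝ) : ℝ := (5 : ℝ) ^ (-2 : ℤ) * t ^ 2 * Real.log t ^ 4

/-- `φ²(t) = 5⁻² e^{-2+2√(1-t)} (2t + 2√(1-t) - 2)²` (with `φ²(0) = 0`). -/
def phi2 (t : ℝ) : ℝ :=
  (5 : ℝ) ^ (-2 : ℤ) * Real.exp (-2 + 2 * Real.sqrt (1 - t)) *
    (2 * t + 2 * Real.sqrt (1 - t) - 2) ^ 2

/-- The generalized inverse restricted to small arguments: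
`φ⁻¹(s) = sup {t ∈ [0,c] : φ t ≤ s}`. -/
def ginvOn (φ : ℝ → ℝ) (c s : ℝ) : ℝ := sSup {t : ℝ | t ∈ Set.Icc 0 c ∧ φ t ≤ s}

/-- The sequence `A_n = log(n^{-1/2} (φ²)⁻¹(n^{-1/2}) / ((φ¹)⁻¹(n^{-1/2}))²)`
(inverses restricted to `[0,c]`). -/
def seqA (c : ℝ) (n : ℕ) : ℝ :=
  Real.log ((Real.sqrt n)⁻¹ * ginvOn phi2 c (Real.sqrt n)⁻¹ /
    ginvOn phi1 c (Real.sqrt n)⁻¹ ^ 2)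

/-- The sequence `B_n = log((φ²)⁻¹(n^{-1/2}) / n^{-1/2})`
(inverse restricted to `[0,c]`). -/
def seqB (c : ℝ) (n : ℕ) : ℝ :=
  Real.log (ginvOn phi2 c (Real.sqrt n)⁻¹ / (Real.sqrt n)⁻¹)

open Filter Topology

/-! Near `0`, `φ²(t) ≍ t²` and `φ¹(t) ≍ t² (log t)⁴`, so for `s = e^{-u}` the generalized inverses
satisfy `(φ²)⁻¹(s) ≍ e^{-u/2}` and `(φ¹)⁻¹(s) ≍ e^{-u/2} / u²`, up to bounded factors (bracket each
between two test points and use monotonicity). With `u = log √n` this gives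
`A_n = -u/2 + 4 log u + O(1)` and `B_n = u/2 + O(1)`, hence
`γ A_n - B_n = -(γ+1) u/2 + 4γ log u + O(1)`, whose absolute value tends to `∞`: through the linear
term if `γ ≠ -1`, through the logarithmic one if `γ = -1`. -/

lemma ginvOn_mem_Icc {φ : ℝ → ℝ} {c s a b : ℝ} (hφ : MonotoneOn φ (Icc 0 c))
    (ha : a ∈ Icc 0 c) (hb : b ∈ Icc 0 c) (hφa : φ a ≤ s) (hφb : s < φ b) :
    ginvOn φ c s ∈ Icc a b :=
  ⟨le_csSup ⟨c, fun _ ht => ht.1.2⟩ ⟨ha, hφa⟩,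
    csSup_le ⟨a, ha, hφa⟩ fun _ ⟨ht, hφt⟩ =>
      not_lt.1 fun hbt => (hφb.trans_le (hφ hb ht hbt.le)).not_ge hφt⟩

lemma phi2_le {t : ℝ} (ht0 : 0 ≤ t) (ht1 : t ≤ 1) : phi2 t ≤ t ^ 2 / 25 := by
  set r := √(1 - t) with hr
  have hr2 : r ^ 2 = 1 - t := sq_sqrt (by linarith)
  have hr0 : 0 ≤ r := sqrt_nonneg _
  have hr1 : r ≤ 1 := sqrt_le_one.2 (by linarith)
  have hexp : exp (-2 + 2 * r) ≤ 1 := exp_le_one_iff.2 (by linarith)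
  have hE : (2 * t + 2 * r - 2) ^ 2 ≤ t ^ 2 := sq_le_sq' (by nlinarith) (by nlinarith)
  have := mul_le_mul hexp hE (sq_nonneg _) zero_le_one
  rw [phi2, ← hr, show (5 : ℝ) ^ (-2 : ℤ) = 1 / 25 by norm_num]
  nlinarith

lemma le_phi2 {t : ℝ} (ht0 : 0 ≤ t) (ht1 : t ≤ 1 / 2) : t ^ 2 / 100 ≤ phi2 t := by
  set r := √(1 - t) with hr
  have hr2 : r ^ 2 = 1 - t := sq_sqrt (by linarith)
  have hr0 : 0 ≤ r := sqrt_nonneg _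
  have hr7 : 7 / 10 ≤ r := by nlinarith
  have hexp : 2 / 5 ≤ exp (-2 + 2 * r) := by linarith [add_one_le_exp (-2 + 2 * r)]
  have hE : (4 * t / 5) ^ 2 ≤ (2 * t + 2 * r - 2) ^ 2 := by
    -- `1 - r = t / (1 + r) ≤ t / 1.7`
    have : 4 * t / 5 ≤ 2 * t + 2 * r - 2 := by nlinarith
    exact pow_le_pow_left₀ (by positivity) this 2
  have := mul_le_mul hexp hE (sq_nonneg _) (exp_pos _).le
  rw [phi2, ← hr, show (5 : ℝ) ^ (-2 : ℤ) = 1 / 25 by norm_num]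
  nlinarith

lemma log_le_half_self {x : ℝ} (hx : 0 < x) : log x ≤ x / 2 :=
  (log_le_iff_le_exp hx).2 <| by
    nlinarith [quadratic_le_exp_of_nonneg (by positivity : 0 ≤ x / 2), sq_nonneg (x - 2)]

lemma exp_neg_half_sq (u : ℝ) : exp (-u / 2) ^ 2 = exp (-u) := by
  rw [← exp_nat_mul]; ring_nf

lemma phi1_mul_exp_neg_half_div_sq {K u : ℝ} (hK : 0 < K) (hu : 0 < u) :
    phi1 (K * exp (-u / 2) / u ^ 2) =
      exp (-u) * K ^ 2 * ((u / 2 + 2 * log u - log K) / u) ^ 4 / 25 := by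
  rw [phi1, log_div (by positivity) (by positivity), log_mul hK.ne' (exp_pos _).ne', log_exp,
    log_pow, ← exp_neg_half_sq]
  field_simp
  ring

lemma phi1_le_exp_neg {u : ℝ} (hu : 1 ≤ u) : phi1 (exp (-u / 2) / u ^ 2) ≤ exp (-u) := by
  have h := phi1_mul_exp_neg_half_div_sq one_pos (by linarith : 0 < u)
  rw [one_mul, log_one, sub_zero, one_pow, mul_one] at h
  have hlog := log_le_half_self (by linarith : 0 < u)
  have hr : (u / 2 + 2 * log u) / u ≤ 3 / 2 := by
    rw [div_le_iff₀ (by linarith)]; linarith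
  have hr0 : 0 ≤ (u / 2 + 2 * log u) / u := by
    have := log_nonneg hu
    positivity
  have := pow_le_pow_left₀ hr0 hr 4
  rw [h]
  nlinarith [exp_pos (-u)]

lemma exp_neg_lt_phi1 {u : ℝ} (hu : 5 ≤ u) : exp (-u) < phi1 (25 * exp (-u / 2) / u ^ 2) := by
  rw [phi1_mul_exp_neg_half_div_sq (by norm_num) (by linarith)]
  have hlog : log 25 ≤ 2 * log u := by
    simpa [log_pow] using log_le_log (by norm_num) (by nlinarith : (25 : ℝ) ≤ u ^ 2)
  have hr : 1 / 2 ≤ (u / 2 + 2 * log u - log 25) / u := by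
    rw [le_div_iff₀ (by linarith)]; linarith
  have := pow_le_pow_left₀ (by norm_num) hr 4
  nlinarith [exp_pos (-u)]

lemma eventually_exp_neg_half_le {ε : ℝ} (hε : 0 < ε) : ∀ᶠ u in atTop, exp (-u / 2) ≤ ε := by
  have := tendsto_exp_neg_atTop_nhds_zero.comp (tendsto_id.atTop_div_const two_pos)
  filter_upwards [this.eventually (ge_mem_nhds hε)] with u hu
  simpa [neg_div] using hu

lemma eventually_ginvOn_phi2_mem {c : ℝ} (hc : 0 < c) (hm : MonotoneOn phi2 (Icc 0 c)) :
    ∀ᶠ u in atTop, ginvOn phi2 c (exp (-u)) ∈ Icc (5 * exp (-u / 2)) (20 * exp (-u / 2)) := by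
  filter_upwards [eventually_exp_neg_half_le (by positivity : 0 < min c (1 / 2) / 20)] with u hu
  have hsmall : 20 * exp (-u / 2) ≤ min c (1 / 2) := by linarith
  have he := exp_pos (-u / 2)
  refine ginvOn_mem_Icc hm ⟨by positivity, by linarith [min_le_left c (1 / 2)]⟩
    ⟨by positivity, hsmall.trans (min_le_left _ _)⟩ ?_ ?_
  · refine (phi2_le (by positivity) (by linarith [min_le_right c (1 / 2)])).trans_eq ?_
    rw [← exp_neg_half_sq]; ring
  · refine lt_of_lt_of_le ?_ (le_phi2 (by positivity) (hsmall.trans (min_le_right _ _)))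
    rw [← exp_neg_half_sq]; nlinarith

lemma eventually_ginvOn_phi1_mem {c : ℝ} (hc : 0 < c) (hm : MonotoneOn phi1 (Icc 0 c)) :
    ∀ᶠ u in atTop,
      ginvOn phi1 c (exp (-u)) ∈ Icc (exp (-u / 2) / u ^ 2) (25 * exp (-u / 2) / u ^ 2) := by
  filter_upwards [eventually_exp_neg_half_le (by positivity : 0 < c / 25), eventually_ge_atTop 5]
    with u hu hu5
  have hb : 25 * exp (-u / 2) / u ^ 2 ≤ c :=
    (div_le_self (by positivity) (by nlinarith)).trans (by linarith)
  refine ginvOn_mem_Icc hm ⟨by positivity, le_trans ?_ hb⟩ ⟨by positivity, hb⟩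
    (phi1_le_exp_neg (by linarith)) (exp_neg_lt_phi1 hu5)
  gcongr
  linarith [exp_pos (-u / 2)]

lemma abs_log_sub_log_le {k K x y : ℝ} (hk : 0 < k) (hy : 0 < y) (hkx : k * y ≤ x)
    (hxK : x ≤ K * y) : |log x - log y| ≤ |log k| + |log K| := by
  have hx : 0 < x := (mul_pos hk hy).trans_le hkx
  have hK : 0 < K := pos_of_mul_pos_left (hx.trans_le hxK) hy.le
  have hlo := log_le_log (mul_pos hk hy) hkx
  have hhi := log_le_log hx hxK
  rw [log_mul hk.ne' hy.ne'] at hlo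
  rw [log_mul hK.ne' hy.ne'] at hhi
  rw [abs_le]
  constructor <;> linarith [neg_abs_le (log k), le_abs_self (log K), abs_nonneg (log k),
    abs_nonneg (log K)]

lemma tendsto_abs_mul_add_mul_log_atTop {a b : ℝ} (h : a ≠ 0 ∨ b ≠ 0) :
    Tendsto (fun u => |a * u + b * log u|) atTop atTop := by
  rcases eq_or_ne a 0 with rfl | ha
  · have hb := h.resolve_left (not_not.2 rfl)
    simpa [abs_mul] using
      (tendsto_abs_atTop_atTop.comp tendsto_log_atTop).const_mul_atTop (abs_pos.2 hb)
  · have hlim : Tendsto (fun u => |a + b * (log u / u)|) atTop (𝓝 |a|) := by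
      simpa using (((tendsto_pow_log_div_mul_add_atTop 1 0 1 one_ne_zero).const_mul b).const_add
        a).abs
    refine (tendsto_id.atTop_mul_pos (abs_pos.2 ha) hlim).congr' ?_
    filter_upwards [eventually_gt_atTop 0] with u hu
    have hfactor : a * u + b * log u = u * (a + b * (log u / u)) := by field_simp
    rw [hfactor, abs_mul, abs_of_pos hu, id]

lemma abs_mul_log_sub_log_sub_le {γ u g₁ g₂ C₁ C₂ : ℝ} (hu : 0 < u) (hg₁ : 0 < g₁) (hg₂ : 0 < g₂)
    (h₁ : |log g₁ - log (exp (-u / 2) / u ^ 2)| ≤ C₁) (h₂ : |log g₂ - log (exp (-u / 2))| ≤ C₂) :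
    |γ * log (exp (-u) * g₂ / g₁ ^ 2) - log (g₂ / exp (-u)) -
        (-(γ + 1) / 2 * u + 4 * γ * log u)| ≤ |γ| * (C₂ + 2 * C₁) + C₂ := by
  rw [log_div (by positivity) (by positivity), log_exp, log_pow] at h₁
  rw [log_exp] at h₂
  set p := log g₁ - (-u / 2 - 2 * log u)
  set q := log g₂ - -u / 2
  have hA : log (exp (-u) * g₂ / g₁ ^ 2) = -u + log g₂ - 2 * log g₁ := by
    rw [log_div (by positivity) (by positivity), log_mul (exp_pos _).ne' hg₂.ne', log_exp, log_pow]
    push_cast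
    ring
  have hB : log (g₂ / exp (-u)) = log g₂ + u := by
    rw [log_div hg₂.ne' (exp_pos _).ne', log_exp]
    ring
  have hrest : γ * log (exp (-u) * g₂ / g₁ ^ 2) - log (g₂ / exp (-u)) -
      (-(γ + 1) / 2 * u + 4 * γ * log u) = γ * (q - 2 * p) - q := by
    rw [hA, hB]
    ring
  have hqp : |q - 2 * p| ≤ C₂ + 2 * C₁ := by
    refine (abs_sub _ _).trans ?_
    rw [abs_mul, abs_two]
    linarith
  rw [hrest]
  refine (abs_sub _ _).trans ?_
  rw [abs_mul]
  gcongr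

lemma tendsto_abs_mul_seqA_sub_seqB {c : ℝ} (hc : 0 < c) (h₁ : MonotoneOn phi1 (Icc 0 c))
    (h₂ : MonotoneOn phi2 (Icc 0 c)) (γ : ℝ) :
    Tendsto (fun n => |γ * seqA c n - seqB c n|) atTop atTop := by
  set u : ℕ → ℝ := fun n => log √n
  have hu : Tendsto u atTop atTop :=
    tendsto_log_atTop.comp (tendsto_sqrt_atTop.comp tendsto_natCast_atTop_atTop)
  obtain ⟨C, hC⟩ : ∃ C, ∀ᶠ n in atTop,
      |γ * seqA c n - seqB c n - (-(γ + 1) / 2 * u n + 4 * γ * log (u n))| ≤ C := by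
    refine ⟨|γ| * (|log 5| + |log 20| + 2 * (|log 1| + |log 25|)) + (|log 5| + |log 20|), ?_⟩
    filter_upwards [hu.eventually (eventually_ginvOn_phi1_mem hc h₁),
      hu.eventually (eventually_ginvOn_phi2_mem hc h₂), hu.eventually (eventually_gt_atTop 0),
      eventually_ne_atTop 0] with n hg₁ hg₂ hun hn
    have hs : (√(n : ℝ))⁻¹ = exp (-u n) := by
      rw [exp_neg, exp_log (by positivity)]
    simp only [seqA, seqB, hs]
    exact abs_mul_log_sub_log_sub_le hun
      (lt_of_lt_of_le (by positivity) hg₁.1) (lt_of_lt_of_le (by positivity) hg₂.1)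
      (abs_log_sub_log_le one_pos (by positivity) (by simpa using hg₁.1)
        (by simpa [mul_div_assoc] using hg₁.2))
      (abs_log_sub_log_le (by norm_num) (exp_pos _) hg₂.1 hg₂.2)
  have hlim := tendsto_abs_mul_add_mul_log_atTop (a := -(γ + 1) / 2) (b := 4 * γ) <| by
    by_contra! h
    linarith [h.1, h.2]
  refine tendsto_atTop_mono' _ ?_ (tendsto_atTop_add_const_right _ (-C) (hlim.comp hu))
  filter_upwards [hC] with n hn
  dsimp only [Function.comp_apply]
  linarith [abs_sub_abs_le_abs_sub (-(γ + 1) / 2 * u n + 4 * γ * log (u n))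
    (γ * seqA c n - seqB c n), abs_sub_comm (γ * seqA c n - seqB c n)
    (-(γ + 1) / 2 * u n + 4 * γ * log (u n))]

theorem statement16_general (c : ℝ) (hc0 : 0 < c)
    (h1m : StrictMonoOn phi1 (Set.Icc 0 c))
    (h2m : StrictMonoOn phi2 (Set.Icc 0 c)) :
    ∀ γ : ℝ, ∀ M : ℝ, ∀ N : ℕ, ∃ n : ℕ, N ≤ n ∧ M < |γ * seqA c n - seqB c n| := by
  intro γ M N
  have h := tendsto_abs_mul_seqA_sub_seqB hc0 h1m.monotoneOn h2m.monotoneOn γ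
  obtain ⟨n, hM, hN⟩ := ((h.eventually_gt_atTop M).and (eventually_ge_atTop N)).exists
  exact ⟨n, hN, hM⟩

/-- For every `γ ∈ ℝ` the sequence `(|γ A_n - B_n|)` (for large `n`) is unbounded,
where the inverses of `φ¹, φ²` are restricted to any interval `[0,c]` on which these
functions are strictly increasing and continuous. -/
theorem statement16 (c : ℝ) (hc0 : 0 < c) (hc1 : c < 1)
    (h1m : StrictMonoOn phi1 (Set.Icc 0 c)) (h1c : ContinuousOn phi1 (Set.Icc 0 c))
    (h2m : StrictMonoOn phi2 (Set.Icc 0 c)) (h2c : ContinuousOn phi2 (Set.Icc 0 c)) :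
    ∀ γ : ℝ, ∀ M : ℝ, ∀ N : ℕ, ∃ n : ℕ, N ≤ n ∧ M < |γ * seqA c n - seqB c n| :=
  statement16_general c hc0 h1m h2m
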